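/- Let N_φ, N_ψ ∈ ℂ, φₙ(x) = (N_φ/(2ⁿ √(n!))) Hₙ(sinh x) e^{−cosh²x}, ψₙ(x) = (2N_ψ/√(n!)) Hₙ(sinh x) cosh x. For h : ℝ → ℂ set h_{[−]}(s) = h(arsinh s) e^{s²/2}, h_{[+]}(s) = h(arsinh s) e^{−s²/2}/√(1+s²), and E_c = { h ∈ L²(ℝ) : h_{[−]} ∈ L²(ℝ) }. Then for every g ∈ E_c and every n ≥ 0: |∫_ℝ conj(g) φₙ dx| ≤ (|N_φ| π^{1/4}/(2^{n/2} e)) ‖g_{[+]}‖₂ and |∫_ℝ conj(ψₙ) g dx| ≤ 2 |N_ψ| 2^{n/2} π^{1/4} ‖g_{[−]}‖₂; consequently, for every z ∈ ℂ the series Σ_{n≥0} (z̄ⁿ/√(n!)) ∫_ℝ conj(φₙ) g dx and Σ_{n≥0} (z̄ⁿ/√(n!)) ∫_ℝ conj(ψₙ) g dx converge absolutely. -/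

import Mathlib

open MeasureTheory

/-- The physicist's Hermite polynomials:
`H₀(y) = 1`, `Hₙ(y) = 2y H_{n−1}(y) − H_{n−1}′(y)`. -/
noncomputable def hermiteH : ℕ → ℝ → ℝ
  | 0 => fun _ => 1
  | n + 1 => fun y => 2 * y * hermiteH n y - deriv (hermiteH n) y

/-- `h_{[−]}(s) = h(arsinh s) e^{s²/2}`. -/
noncomputable def minusT (h : ℝ → ℂ) : ℝ → ℂ :=
  fun s => h (Real.arsinh s) * (Real.exp (s ^ 2 / 2) : ℂ)

/-- `h_{[+]}(s) = h(arsinh s) e^{−s²/2}/√(1+s²)`. -/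
noncomputable def plusT (h : ℝ → ℂ) : ℝ → ℂ :=
  fun s => h (Real.arsinh s) * (Real.exp (-s ^ 2 / 2) : ℂ) / (Real.sqrt (1 + s ^ 2) : ℂ)

/-- `E_c = { h ∈ L² : h_{[−]} ∈ L² }`. -/
def Ec : Set (ℝ → ℂ) :=
  {h | MemLp h 2 (volume : Measure ℝ) ∧ MemLp (minusT h) 2 (volume : Measure ℝ)}


/-!
Substituting `s = sinh x` (so `ds = cosh x dx` and `cosh² x = 1 + s²`) turns both pairings into
pairings with the Hermite function `Hₙ(s) e^{−s²/2}`: up to constants, `⟨g, φₙ⟩` becomes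
`e^{−1} ⟨g_{[+]}, Hₙ e^{−s²/2}⟩` and `⟨ψₙ, g⟩` becomes `⟨Hₙ e^{−s²/2}, g_{[−]}⟩`.
Cauchy–Schwarz together with `∫ Hₙ² e^{−s²} = 2ⁿ n! √π` (integration by parts, using
`Hₙ₊₁ e^{−s²} = −(Hₙ e^{−s²})′` and `Hₙ₊₁′ = 2(n+1) Hₙ`) gives the two estimates, where
`g_{[+]} ∈ L²` because `|g_{[+]}| ≤ |g_{[−]}|`. The series terms are then bounded by
`C (|z| 2^{∓1/2})ⁿ / √n!`, which is summable since `2ab ≤ a² + b²` with `a = (2|q|)ⁿ/√n!`,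
`b = 2⁻ⁿ` dominates `|q|ⁿ/√n!` by `((4q²)ⁿ/n! + 4⁻ⁿ)/2`.
-/

open Real Polynomial ComplexConjugate

noncomputable def hermitePoly : ℕ → ℝ[X]
  | 0 => 1
  | n + 1 => 2 * X * hermitePoly n - derivative (hermitePoly n)

lemma hermitePoly_succ (n : ℕ) :
    hermitePoly (n + 1) = 2 * X * hermitePoly n - derivative (hermitePoly n) :=
  rfl

lemma hermiteH_eq_eval (n : ℕ) : hermiteH n = fun y => (hermitePoly n).eval y := by
  induction n with
  | zero => funext; simp [hermiteH, hermitePoly]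
  | succ n ih =>
    funext y
    simp [hermiteH, hermitePoly, ih, Polynomial.deriv]

lemma derivative_hermitePoly_succ (n : ℕ) :
    derivative (hermitePoly (n + 1)) = 2 * (n + 1 : ℝ[X]) * hermitePoly n := by
  induction n with
  | zero => simp [hermitePoly]
  | succ n ih =>
    rw [hermitePoly_succ (n + 1)]
    simp only [derivative_sub, derivative_mul, ih, derivative_add, derivative_ofNat, derivative_X,
      derivative_natCast, derivative_one]
    push_cast
    linear_combination (-2 * (n + 1 : ℝ[X])) * hermitePoly_succ n

lemma integrable_eval_mul_exp_neg_mul_sq (p : ℝ[X]) {b : ℝ} (hb : 0 < b) :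
    Integrable fun x => p.eval x * exp (-b * x ^ 2) := by
  simp_rw [eval_eq_sum_range, Finset.sum_mul]
  refine integrable_finsetSum _ fun i _ => ?_
  simpa [mul_assoc, rpow_natCast] using (integrable_rpow_mul_exp_neg_mul_sq hb (s := i)
    (neg_one_lt_zero.trans_le i.cast_nonneg)).const_mul (p.coeff i)

lemma hasDerivAt_eval_hermitePoly_mul_exp (n : ℕ) (x : ℝ) :
    HasDerivAt (fun x => (hermitePoly n).eval x * exp (-x ^ 2))
      (-((hermitePoly (n + 1)).eval x * exp (-x ^ 2))) x := by
  have hexp : HasDerivAt (fun x => exp (-x ^ 2)) (exp (-x ^ 2) * -(2 * x)) x := by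
    simpa using ((hasDerivAt_pow 2 x).neg).exp
  refine (((hermitePoly n).hasDerivAt x).mul hexp).congr_deriv ?_
  rw [hermitePoly_succ]
  simp only [eval_sub, eval_mul, eval_ofNat, eval_X]
  ring

lemma integral_eval_hermitePoly_sq_mul_exp (n : ℕ) :
    ∫ x, (hermitePoly n).eval x ^ 2 * exp (-x ^ 2) = 2 ^ n * n.factorial * √π := by
  have hint (p : ℝ[X]) : Integrable fun x => p.eval x * exp (-x ^ 2) := by
    simpa using integrable_eval_mul_exp_neg_mul_sq p one_pos
  induction n with
  | zero => simpa [hermitePoly] using integral_gaussian 1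
  | succ n ih =>
    set H := hermitePoly (n + 1)
    have parts := integral_mul_deriv_eq_deriv_mul_of_integrable (u := fun x => H.eval x)
      (u' := fun x => (derivative H).eval x) (fun x _ => H.hasDerivAt x)
      (fun x _ => hasDerivAt_eval_hermitePoly_mul_exp n x)
      (by simpa [Pi.mul_def, eval_mul, mul_assoc] using (hint (H * H)).neg)
      (by simpa [Pi.mul_def, eval_mul, mul_assoc] using hint (derivative H * hermitePoly n))
      (by simpa [Pi.mul_def, eval_mul, mul_assoc] using hint (H * hermitePoly n))
    simp only [H, derivative_hermitePoly_succ, eval_mul, eval_add, eval_ofNat, eval_natCast,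
      eval_one, mul_neg, integral_neg, neg_inj] at parts
    calc ∫ x, H.eval x ^ 2 * exp (-x ^ 2)
        = ∫ x, H.eval x * (H.eval x * exp (-x ^ 2)) := by simp only [sq, mul_assoc]
      _ = 2 * (n + 1) * ∫ x, (hermitePoly n).eval x ^ 2 * exp (-x ^ 2) := by
        rw [parts, ← integral_const_mul]
        congr with x
        ring
      _ = 2 ^ (n + 1) * (n + 1).factorial * √π := by
        rw [ih, Nat.factorial_succ]
        push_cast
        ring

noncomputable def hermiteFunction (n : ℕ) (s : ℝ) : ℂ :=
  ((hermiteH n s * exp (-s ^ 2 / 2) : ℝ) : ℂ)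

lemma continuous_hermiteFunction (n : ℕ) : Continuous (hermiteFunction n) := by
  unfold hermiteFunction
  rw [hermiteH_eq_eval]
  fun_prop

lemma norm_hermiteFunction_sq (n : ℕ) (s : ℝ) :
    ‖hermiteFunction n s‖ ^ 2 = (hermitePoly n).eval s ^ 2 * exp (-s ^ 2) := by
  rw [hermiteFunction, Complex.norm_real, norm_mul, mul_pow, Real.norm_eq_abs, sq_abs,
    norm_of_nonneg (exp_pos _).le, ← exp_nat_mul, hermiteH_eq_eval]
  ring_nf

lemma memLp_hermiteFunction (n : ℕ) : MemLp (hermiteFunction n) 2 volume := by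
  refine (memLp_two_iff_integrable_sq_norm
    (continuous_hermiteFunction n).aestronglyMeasurable).2 ?_
  simp_rw [norm_hermiteFunction_sq]
  exact (integrable_eval_mul_exp_neg_mul_sq (hermitePoly n ^ 2) one_pos).congr
    (.of_forall fun x => by simp)

lemma eLpNorm_hermiteFunction (n : ℕ) :
    (eLpNorm (hermiteFunction n) 2 volume).toReal = √2 ^ n * √n.factorial * π ^ (1 / 4 : ℝ) := by
  rw [(memLp_hermiteFunction n).eLpNorm_eq_integral_rpow_norm two_ne_zero ENNReal.ofNat_ne_top,
    ENNReal.toReal_ofReal (by positivity)]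
  simp only [ENNReal.toReal_ofNat, rpow_two, norm_hermiteFunction_sq,
    integral_eval_hermitePoly_sq_mul_exp]
  rw [mul_rpow (by positivity) (by positivity), mul_rpow (by positivity) (by positivity),
    ← rpow_natCast, ← rpow_mul zero_le_two, mul_comm (n : ℝ), rpow_mul zero_le_two, rpow_natCast,
    sqrt_eq_rpow π, ← rpow_mul pi_pos.le, inv_eq_one_div, ← sqrt_eq_rpow, ← sqrt_eq_rpow]
  norm_num

lemma norm_integral_inner_le {α 𝕜 E : Type*} [MeasurableSpace α] {μ : Measure α} [RCLike 𝕜]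
    [NormedAddCommGroup E] [InnerProductSpace 𝕜 E] {f g : α → E} (hf : MemLp f 2 μ)
    (hg : MemLp g 2 μ) :
    ‖∫ x, inner 𝕜 (f x) (g x) ∂μ‖ ≤ (eLpNorm f 2 μ).toReal * (eLpNorm g 2 μ).toReal := by
  have h := norm_inner_le_norm (𝕜 := 𝕜) (hf.toLp f) (hg.toLp g)
  rwa [L2.inner_def, Lp.norm_toLp, Lp.norm_toLp, integral_congr_ae
    (hf.coeFn_toLp.mp (hg.coeFn_toLp.mono fun x hgx hfx => by rw [hfx, hgx]))] at h

lemma norm_integral_conj_mul_le {α : Type*} [MeasurableSpace α] {μ : Measure α} {f g : α → ℂ}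
    (hf : MemLp f 2 μ) (hg : MemLp g 2 μ) :
    ‖∫ x, conj (f x) * g x ∂μ‖ ≤ (eLpNorm f 2 μ).toReal * (eLpNorm g 2 μ).toReal := by
  simpa only [RCLike.inner_apply'] using norm_integral_inner_le (𝕜 := ℂ) hf hg

lemma norm_integral_conj_mul_comm {α : Type*} [MeasurableSpace α] {μ : Measure α} (f g : α → ℂ) :
    ‖∫ x, conj (f x) * g x ∂μ‖ = ‖∫ x, conj (g x) * f x ∂μ‖ := by
  rw [← RCLike.norm_conj, ← integral_conj]
  simp only [map_mul, Complex.conj_conj, mul_comm]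

lemma integral_cosh_smul_comp_sinh {E : Type*} [NormedAddCommGroup E] [NormedSpace ℝ E]
    (F : ℝ → E) : ∫ x, cosh x • F (sinh x) = ∫ s, F s := by
  have h := integral_image_eq_integral_abs_deriv_smul MeasurableSet.univ
    (fun x _ => (hasDerivAt_sinh x).hasDerivWithinAt) sinh_injective.injOn F
  simp only [Set.image_univ, sinh_surjective.range_eq, setIntegral_univ,
    abs_of_pos (cosh_pos _)] at h
  exact h.symm

lemma plusT_eq_mul_minusT (h : ℝ → ℂ) :
    plusT h = fun s => ((exp (-s ^ 2) / √(1 + s ^ 2) : ℝ) : ℂ) * minusT h s := by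
  funext s
  have hexp : exp (-s ^ 2) * exp (s ^ 2 / 2) = exp (-s ^ 2 / 2) := by
    rw [← exp_add]; ring_nf
  simp only [plusT, minusT, Complex.ofReal_div, ← hexp, Complex.ofReal_mul]
  ring

lemma memLp_plusT {h : ℝ → ℂ} (hm : MemLp (minusT h) 2 volume) : MemLp (plusT h) 2 volume := by
  have hweight : MemLp (fun s : ℝ => ((exp (-s ^ 2) / √(1 + s ^ 2) : ℝ) : ℂ)) ⊤ volume := by
    refine memLp_top_of_bound (Measurable.aestronglyMeasurable (by fun_prop)) 1
      (.of_forall fun s => ?_)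
    rw [Complex.norm_real, norm_of_nonneg (by positivity)]
    exact div_le_one_of_le₀ ((exp_le_one_iff.2 (by nlinarith)).trans
      (one_le_sqrt.2 (by nlinarith))) (sqrt_nonneg _)
  rw [plusT_eq_mul_minusT]
  exact hm.mul' hweight

lemma integral_conj_mul_hermiteH_sinh_mul_exp (g : ℝ → ℂ) (n : ℕ) (c : ℂ) :
    ∫ x, conj (g x) * (c * (hermiteH n (sinh x) : ℂ) * (exp (-(cosh x) ^ 2) : ℂ))
      = c * (exp (-1) : ℂ) * ∫ s, conj (plusT g s) * hermiteFunction n s := by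
  conv_rhs => rw [← integral_const_mul, ← integral_cosh_smul_comp_sinh]
  congr with x
  have hsqrt : √(1 + sinh x ^ 2) = cosh x := by
    rw [← cosh_sq', sqrt_sq (cosh_pos x).le]
  have hexp : exp (-cosh x ^ 2) = exp (-1) * exp (-sinh x ^ 2 / 2) * exp (-sinh x ^ 2 / 2) := by
    rw [← exp_add, ← exp_add, cosh_sq']
    ring_nf
  have hcosh : (cosh x : ℂ) ≠ 0 := Complex.ofReal_ne_zero.2 (cosh_pos x).ne'
  simp only [plusT, hermiteFunction, arsinh_sinh, hsqrt, hexp, Complex.real_smul, map_mul,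
    map_div₀, Complex.conj_ofReal, Complex.ofReal_mul]
  field_simp

lemma integral_conj_hermiteH_sinh_mul_cosh_mul (g : ℝ → ℂ) (n : ℕ) (c : ℂ) :
    ∫ x, conj (c * (hermiteH n (sinh x) : ℂ) * (cosh x : ℂ)) * g x
      = conj c * ∫ s, conj (hermiteFunction n s) * minusT g s := by
  conv_rhs => rw [← integral_const_mul, ← integral_cosh_smul_comp_sinh]
  congr with x
  have hexp : (exp (-sinh x ^ 2 / 2) : ℂ) * (exp (sinh x ^ 2 / 2) : ℂ) = 1 := by
    rw [← Complex.ofReal_mul, ← exp_add, neg_div, neg_add_cancel, exp_zero, Complex.ofReal_one]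
  simp only [minusT, hermiteFunction, arsinh_sinh, Complex.real_smul, map_mul,
    Complex.conj_ofReal, Complex.ofReal_mul]
  linear_combination (-(conj c * (hermiteH n (sinh x) : ℂ) * (cosh x : ℂ) * g x)) * hexp

lemma norm_integral_conj_mul_phi_le (Nφ : ℂ) (n : ℕ) {g : ℝ → ℂ}
    (hg : MemLp (minusT g) 2 volume) :
    ‖∫ x, conj (g x) * (Nφ / ((2 : ℂ) ^ n * (√n.factorial : ℂ))
        * (hermiteH n (sinh x) : ℂ) * (exp (-(cosh x) ^ 2) : ℂ))‖
      ≤ ‖Nφ‖ * π ^ (1 / 4 : ℝ) / (√2 ^ n * exp 1) * (eLpNorm (plusT g) 2 volume).toReal := by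
  rw [integral_conj_mul_hermiteH_sinh_mul_exp, norm_mul]
  calc _ ≤ ‖Nφ / ((2 : ℂ) ^ n * (√n.factorial : ℂ)) * (exp (-1) : ℂ)‖
        * ((eLpNorm (plusT g) 2 volume).toReal * (√2 ^ n * √n.factorial * π ^ (1 / 4 : ℝ))) := by
        rw [← eLpNorm_hermiteFunction]
        gcongr
        exact norm_integral_conj_mul_le (memLp_plusT hg) (memLp_hermiteFunction n)
    _ = _ := by
        have h2 : (2 : ℝ) ^ n = √2 ^ n * √2 ^ n := by rw [← mul_pow, mul_self_sqrt zero_le_two]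
        have hfac : 0 < √(n.factorial : ℝ) := sqrt_pos.2 (by positivity)
        simp only [norm_mul, norm_div, norm_pow, Complex.norm_ofNat, Complex.norm_real,
          norm_of_nonneg hfac.le, Real.norm_eq_abs, abs_exp, h2]
        rw [exp_neg]
        field_simp

lemma norm_integral_conj_psi_mul_le (Nψ : ℂ) (n : ℕ) {g : ℝ → ℂ} (hg : MemLp (minusT g) 2 volume) :
    ‖∫ x, conj (2 * Nψ / (√n.factorial : ℂ) * (hermiteH n (sinh x) : ℂ) * (cosh x : ℂ)) * g x‖
      ≤ 2 * ‖Nψ‖ * √2 ^ n * π ^ (1 / 4 : ℝ) * (eLpNorm (minusT g) 2 volume).toReal := by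
  rw [integral_conj_hermiteH_sinh_mul_cosh_mul, norm_mul, RCLike.norm_conj]
  calc _ ≤ ‖2 * Nψ / (√n.factorial : ℂ)‖
        * ((√2 ^ n * √n.factorial * π ^ (1 / 4 : ℝ)) * (eLpNorm (minusT g) 2 volume).toReal) := by
        rw [← eLpNorm_hermiteFunction]
        gcongr
        exact norm_integral_conj_mul_le (memLp_hermiteFunction n) hg
    _ = _ := by
        have hfac : 0 < √(n.factorial : ℝ) := sqrt_pos.2 (by positivity)
        simp only [norm_mul, norm_div, Complex.norm_ofNat, Complex.norm_real,
          norm_of_nonneg hfac.le]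
        field_simp

lemma summable_pow_div_sqrt_factorial (q : ℝ) : Summable fun n : ℕ => q ^ n / √n.factorial := by
  refine .of_norm_bounded
    (((Real.summable_pow_div_factorial (4 * q ^ 2)).add
      (summable_geometric_of_lt_one (by norm_num : (0 : ℝ) ≤ 1 / 4) (by norm_num))).div_const 2)
    fun n => ?_
  have hfac : 0 < √(n.factorial : ℝ) := sqrt_pos.2 (by positivity)
  have hamgm := two_mul_le_add_sq ((2 * |q|) ^ n / √n.factorial) ((1 / 2 : ℝ) ^ n)
  calc ‖q ^ n / √n.factorial‖ = (2 * |q|) ^ n / √n.factorial * (1 / 2 : ℝ) ^ n := by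
        rw [norm_div, norm_pow, norm_of_nonneg hfac.le, Real.norm_eq_abs, div_mul_eq_mul_div,
          ← mul_pow]
        congr 2
        ring
    _ ≤ (((2 * |q|) ^ n / √n.factorial) ^ 2 + ((1 / 2 : ℝ) ^ n) ^ 2) / 2 := by linarith
    _ = ((4 * q ^ 2) ^ n / n.factorial + (1 / 4) ^ n) / 2 := by
        rw [div_pow, sq_sqrt (by positivity), ← pow_mul, ← pow_mul, mul_comm n 2, pow_mul, pow_mul,
          mul_pow, sq_abs]
        norm_num

lemma summable_norm_conj_pow_div_sqrt_factorial_mul {a : ℕ → ℂ} {C r : ℝ}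
    (ha : ∀ n, ‖a n‖ ≤ C * r ^ n) (z : ℂ) :
    Summable fun n : ℕ => ‖conj z ^ n / (√n.factorial : ℂ) * a n‖ := by
  refine .of_nonneg_of_le (fun n => norm_nonneg _) (fun n => ?_)
    ((summable_pow_div_sqrt_factorial (‖z‖ * r)).mul_left C)
  have hfac : 0 < √(n.factorial : ℝ) := sqrt_pos.2 (by positivity)
  rw [norm_mul, norm_div, norm_pow, RCLike.norm_conj, Complex.norm_real, norm_of_nonneg hfac.le]
  calc _ ≤ ‖z‖ ^ n / √n.factorial * (C * r ^ n) := by gcongr; exact ha n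
    _ = C * ((‖z‖ * r) ^ n / √n.factorial) := by ring

/-- the estimates on the compatibility forms of `g` with `φₙ, ψₙ`,
and the absolute convergence of the weak bi-coherent state series. -/
theorem stmt15 (Nφ Nψ : ℂ)
    (φ ψ : ℕ → ℝ → ℂ)
    (hφdef : ∀ n : ℕ, φ n = fun x =>
      Nφ / ((2 : ℂ) ^ n * (Real.sqrt n.factorial : ℂ))
        * (hermiteH n (Real.sinh x) : ℂ) * (Real.exp (-(Real.cosh x) ^ 2) : ℂ))
    (hψdef : ∀ n : ℕ, ψ n = fun x =>
      2 * Nψ / (Real.sqrt n.factorial : ℂ)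
        * (hermiteH n (Real.sinh x) : ℂ) * (Real.cosh x : ℂ)) :
    ∀ g ∈ Ec,
      (∀ n : ℕ, ‖∫ x : ℝ, (starRingEnd ℂ) (g x) * φ n x‖
        ≤ ‖Nφ‖ * Real.pi ^ ((1 : ℝ) / 4) / (Real.sqrt 2 ^ n * Real.exp 1)
          * (eLpNorm (plusT g) 2 (volume : Measure ℝ)).toReal) ∧
      (∀ n : ℕ, ‖∫ x : ℝ, (starRingEnd ℂ) (ψ n x) * g x‖
        ≤ 2 * ‖Nψ‖ * Real.sqrt 2 ^ n * Real.pi ^ ((1 : ℝ) / 4)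
          * (eLpNorm (minusT g) 2 (volume : Measure ℝ)).toReal) ∧
      (∀ z : ℂ, Summable (fun n : ℕ =>
        ‖((starRingEnd ℂ) z) ^ n / (Real.sqrt n.factorial : ℂ)
          * ∫ x : ℝ, (starRingEnd ℂ) (φ n x) * g x‖)) ∧
      (∀ z : ℂ, Summable (fun n : ℕ =>
        ‖((starRingEnd ℂ) z) ^ n / (Real.sqrt n.factorial : ℂ)
          * ∫ x : ℝ, (starRingEnd ℂ) (ψ n x) * g x‖)) := by
  rintro g ⟨-, hg⟩
  have hφ (n : ℕ) : ‖∫ x, conj (g x) * φ n x‖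
      ≤ ‖Nφ‖ * π ^ (1 / 4 : ℝ) / (√2 ^ n * exp 1) * (eLpNorm (plusT g) 2 volume).toReal :=
    hφdef n ▸ norm_integral_conj_mul_phi_le Nφ n hg
  have hψ (n : ℕ) : ‖∫ x, conj (ψ n x) * g x‖
      ≤ 2 * ‖Nψ‖ * √2 ^ n * π ^ (1 / 4 : ℝ) * (eLpNorm (minusT g) 2 volume).toReal :=
    hψdef n ▸ norm_integral_conj_psi_mul_le Nψ n hg
  refine ⟨hφ, hψ, fun z => ?_, fun z => ?_⟩
  · refine summable_norm_conj_pow_div_sqrt_factorial_mul (r := (√2)⁻¹)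
      (C := ‖Nφ‖ * π ^ (1 / 4 : ℝ) / exp 1 * (eLpNorm (plusT g) 2 volume).toReal) (fun n => ?_) z
    rw [norm_integral_conj_mul_comm]
    exact (hφ n).trans_eq (by rw [inv_pow]; field_simp)
  · exact summable_norm_conj_pow_div_sqrt_factorial_mul (r := √2)
      (C := 2 * ‖Nψ‖ * π ^ (1 / 4 : ℝ) * (eLpNorm (minusT g) 2 volume).toReal)
      (fun n => (hψ n).trans_eq (by ring)) z
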